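/- Let f : X → X be a continuous map on a compact metric space, K ⊆ X a nonempty closed f-invariant subset, and φ : X → ℝ continuous. Suppose that for every x ∈ K, every ε > 0, and every N ∈ ℕ, the open set Δ(x, ε, N) := { y ∈ ball(x, ε) : ∃ n₁, n₂ ≥ N, (1/n₁)∑_{i<n₁} φ(f^i(y)) − (1/n₂)∑_{i<n₂} φ(f^i(y)) > 1/2 } intersects K. Then there is a residual subset R of K (with the subspace topology) such that every y ∈ R has historic behavior with respect to φ. -/

import Mathlib

open Filter Finset Metric

/-!
For each `N`, the points of `K` whose Birkhoff averages differ by more than `1/2` at two times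
`≥ N` form a relatively open set (the averages are continuous), which is dense in `K` by
hypothesis. Their intersection over `N` is residual, and along each of its points the averages
are not Cauchy, hence do not converge.
-/

theorem continuous_birkhoffAverage {α R M : Type*} [TopologicalSpace α] [DivisionSemiring R]
    [AddCommMonoid M] [TopologicalSpace M] [ContinuousAdd M] [Module R M]
    [ContinuousConstSMul R M] {f : α → α} {g : α → M} (hf : Continuous f) (hg : Continuous g)
    (n : ℕ) : Continuous (birkhoffAverage R f g n) :=
  (continuous_finsetSum _ fun k _ => hg.comp (hf.iterate k)).const_smul _

theorem isOpen_setOf_exists_lt_sub {Y : Type*} [TopologicalSpace Y] {g : ℕ → Y → ℝ}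
    (hg : ∀ n, Continuous (g n)) (δ : ℝ) (N : ℕ) :
    IsOpen {y | ∃ n₁ n₂, N ≤ n₁ ∧ N ≤ n₂ ∧ δ < g n₁ y - g n₂ y} := by
  have hunion : {y | ∃ n₁ n₂, N ≤ n₁ ∧ N ≤ n₂ ∧ δ < g n₁ y - g n₂ y}
      = ⋃ n₁ ≥ N, ⋃ n₂ ≥ N, {y | δ < g n₁ y - g n₂ y} := by
    ext y
    simp only [Set.mem_ofPred_eq, Set.mem_iUnion, exists_prop]
    grind
  rw [hunion]
  exact isOpen_biUnion fun n₁ _ => isOpen_biUnion fun n₂ _ =>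
    isOpen_lt continuous_const ((hg n₁).sub (hg n₂))

theorem not_tendsto_of_forall_exists_lt_sub {u : ℕ → ℝ} {δ : ℝ} (hδ : 0 < δ)
    (h : ∀ N, ∃ n₁ n₂, N ≤ n₁ ∧ N ≤ n₂ ∧ δ < u n₁ - u n₂) (L : ℝ) :
    ¬ Tendsto u atTop (nhds L) := by
  intro hL
  obtain ⟨N, hN⟩ := Metric.cauchySeq_iff.1 hL.cauchySeq δ hδ
  obtain ⟨n₁, n₂, h₁, h₂, hgap⟩ := h N
  have hclose : |u n₁ - u n₂| < δ := hN n₁ h₁ n₂ h₂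
  linarith [le_abs_self (u n₁ - u n₂)]

theorem Metric.dense_preimage_val_of_forall_ball {X : Type*} [PseudoMetricSpace X]
    {K s : Set X} (h : ∀ x ∈ K, ∀ ε > 0, (ball x ε ∩ s ∩ K).Nonempty) :
    Dense (((↑) : K → X) ⁻¹' s) := by
  refine Metric.dense_iff.2 fun x ε hε => ?_
  obtain ⟨y, ⟨hyx, hys⟩, hyK⟩ := h x x.2 ε hε
  exact ⟨⟨y, hyK⟩, hyx, hys⟩

theorem stmt_3_general {X : Type*} [MetricSpace X]
    (f : X → X) (hf : Continuous f) (φ : X → ℝ) (hφ : Continuous φ)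
    (K : Set X)
    (S : X → ℕ → ℝ)
    (hS : ∀ y n, S y n = (∑ i ∈ Finset.range n, φ (f^[i] y)) / n)
    (hdense : ∀ x ∈ K, ∀ ε > (0:ℝ), ∀ N : ℕ,
      ({y ∈ ball x ε | ∃ n₁ n₂ : ℕ, N ≤ n₁ ∧ N ≤ n₂ ∧ S y n₁ - S y n₂ > 1 / 2}
        ∩ K).Nonempty) :
    ∃ R : Set K, R ∈ residual K ∧
      ∀ y ∈ R, ¬ ∃ L : ℝ, Tendsto (fun n => S (y : X) n) atTop (nhds L) := by
  have hS_eq : ∀ n, (S · n) = birkhoffAverage ℝ f φ n := fun n => by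
    ext y
    rw [hS, birkhoffAverage, birkhoffSum, smul_eq_mul, div_eq_inv_mul]
  have hS_cont : ∀ n, Continuous (S · n) := fun n => by
    rw [hS_eq]
    exact continuous_birkhoffAverage hf hφ n
  let V : ℕ → Set X := fun N => {y | ∃ n₁ n₂, N ≤ n₁ ∧ N ≤ n₂ ∧ 1 / 2 < S y n₁ - S y n₂}
  refine ⟨⋂ N, ((↑) : K → X) ⁻¹' V N, countable_iInter_mem.2 fun N => ?_, ?_⟩
  · exact residual_of_dense_open
      ((isOpen_setOf_exists_lt_sub hS_cont _ N).preimage continuous_subtype_val)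
      (Metric.dense_preimage_val_of_forall_ball fun x hx ε hε => hdense x hx ε hε N)
  · rintro y hy ⟨L, hL⟩
    exact not_tendsto_of_forall_exists_lt_sub one_half_pos (Set.mem_iInter.1 hy) L hL

theorem stmt_3 {X : Type*} [MetricSpace X] [CompactSpace X]
    (f : X → X) (hf : Continuous f) (φ : X → ℝ) (hφ : Continuous φ)
    (K : Set X) (hKne : K.Nonempty) (hKcl : IsClosed K) (hKinv : f '' K ⊆ K)
    (S : X → ℕ → ℝ)
    (hS : ∀ y n, S y n = (∑ i ∈ Finset.range n, φ (f^[i] y)) / n)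
    (hdense : ∀ x ∈ K, ∀ ε > (0:ℝ), ∀ N : ℕ,
      ({y ∈ ball x ε | ∃ n₁ n₂ : ℕ, N ≤ n₁ ∧ N ≤ n₂ ∧ S y n₁ - S y n₂ > 1 / 2}
        ∩ K).Nonempty) :
    ∃ R : Set K, R ∈ residual K ∧
      ∀ y ∈ R, ¬ ∃ L : ℝ, Tendsto (fun n => S (y : X) n) atTop (nhds L) :=
  stmt_3_general f hf φ hφ K S hS hdense
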